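/- Let V be a finite-dimensional real vector space with a complex structure J (a linear map with J^2 = -Id). Suppose A : V × V → V is a bilinear map that is complex-antilinear in the first argument and complex-linear in the second, i.e. A(JX,Y) = -JA(X,Y) and A(X,JY) = JA(X,Y) for all X,Y, and suppose A(X,X) lies in the complex span of X (i.e. A(X,X) ∈ span_ℝ{X, JX}) for every X ∈ V. If dim_ℂ V ≥ 2, then there exists a real linear functional φ : V → ℝ such that A(X,Y) = φ(X)Y + φ(JX)JY for all X,Y ∈ V. -/
import Mathlib

theorem sesq_diag_aux {V : Type*} [AddCommGroup V] [Module ℂ V]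
    (A : V → V → V)
    (hadd1 : ∀ X X' Y, A (X + X') Y = A X Y + A X' Y)
    (hadd2 : ∀ X Y Y', A X (Y + Y') = A X Y + A X Y')
    (hsm1 : ∀ (c : ℂ) X Y, A (c • X) Y = (starRingEnd ℂ c) • A X Y)
    (hsm2 : ∀ (c : ℂ) X Y, A X (c • Y) = c • A X Y)
    (hdiag : ∀ X, ∃ c : ℂ, A X X = c • X) :
    ∃ f : V → ℂ, ∀ X Y, A X Y = f X • Y := by
  classical
  choose F hF using hdiag
  refine ⟨fun X => if X = 0 then 0 else F X, fun X Y => ?_⟩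
  by_cases hX : X = 0
  · subst hX
    have h0 : A 0 Y = 0 := by
      have h := hadd1 0 0 Y
      rw [zero_add] at h
      exact (left_eq_add.mp h)
    simp [h0]
  · simp only []
    show A X Y = (if X = 0 then 0 else F X) • Y
    rw [if_neg hX]
    by_cases hY : ∃ c : ℂ, Y = c • X
    · obtain ⟨c, rfl⟩ := hY
      rw [hsm2, hF X, smul_smul, smul_smul, mul_comm]
    · -- ℂ-independence of X and Y
      have hind : ∀ a b : ℂ, a • X + b • Y = 0 → a = 0 ∧ b = 0 := by
        intro a b hab
        have hb : b = 0 := by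
          by_contra hb
          refine hY ⟨-b⁻¹ * a, ?_⟩
          have h1 : b • Y = -(a • X) := by
            rw [eq_neg_iff_add_eq_zero, add_comm]; exact hab
          have h2 : Y = b⁻¹ • (b • Y) := (inv_smul_smul₀ hb Y).symm
          rw [h1, smul_neg, smul_smul] at h2
          rw [h2]
          rw [← neg_smul]
          ring_nf
        refine ⟨?_, hb⟩
        rw [hb, zero_smul, add_zero] at hab
        by_contra ha
        exact hX (by rw [← inv_smul_smul₀ ha X, hab, smul_zero])
      -- key expansion
      set f := F X with hfd
      set g := F Y with hgd
      have hex : ∀ c : ℂ, ∃ l : ℂ, l • X + (l * c) • Y =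
          f • X + ((starRingEnd ℂ c) * c * g) • Y + c • A X Y + (starRingEnd ℂ c) • A Y X := by
        intro c
        obtain ⟨l, hl⟩ := (⟨F (X + c • Y), hF _⟩ : ∃ l : ℂ, A (X + c • Y) (X + c • Y) = l • (X + c • Y))
        simp only [hadd1, hadd2, hsm1, hsm2, hF] at hl
        exact ⟨l, by linear_combination (norm := module) -hl⟩
      obtain ⟨l1, h1⟩ := hex 1
      obtain ⟨l2, h2⟩ := hex (-1)
      obtain ⟨l3, h3⟩ := hex Complex.I
      obtain ⟨l4, h4⟩ := hex (-Complex.I)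
      have h1' : l1 • X + l1 • Y = f • X + g • Y + A X Y + A Y X := by
        simp only [map_one, mul_one, one_mul, one_smul] at h1
        linear_combination (norm := module) h1
      have h2' : l2 • X - l2 • Y = f • X + g • Y - A X Y - A Y X := by
        simp only [map_neg, map_one] at h2
        linear_combination (norm := module) h2
      have h3' : l3 • X + (l3 * Complex.I) • Y =
          f • X + g • Y + Complex.I • A X Y - Complex.I • A Y X := by
        simp only [Complex.conj_I] at h3
        linear_combination (norm := module) h3 + (-(g) * Complex.I_sq) • Y
      have h4' : l4 • X - (l4 * Complex.I) • Y =
          f • X + g • Y - Complex.I • A X Y + Complex.I • A Y X := by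
        simp only [map_neg, Complex.conj_I] at h4
        linear_combination (norm := module) h4 + (-(g) * Complex.I_sq) • Y
      have e12 : (l1 + l2 - 2 * f) • X + (l1 - l2 - 2 * g) • Y = 0 := by
        linear_combination (norm := module) h1' + h2'
      have e34 : (l3 + l4 - 2 * f) • X + ((l3 - l4) * Complex.I - 2 * g) • Y = 0 := by
        linear_combination (norm := module) h3' + h4'
      obtain ⟨s1, s2⟩ := hind _ _ e12
      obtain ⟨s3, s4⟩ := hind _ _ e34
      linear_combination (norm := module) (-(1/4 : ℂ)) • h1' + (1/4 : ℂ) • h2'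
        + (Complex.I/4) • h3' + (-(Complex.I/4)) • h4'
        + ((1/4 : ℂ) * s2 - (1/4 : ℂ) * s4) • X
        + ((1/4 : ℂ) * s1 - (Complex.I^2/4) * s3 - (f/2) * Complex.I_sq) • Y
        + ((1/2 : ℂ) * Complex.I_sq) • (A X Y)
        + (-(1/2 : ℂ) * Complex.I_sq) • (A Y X)

/-- An antilinear–linear (2,1)-tensor `A` on a real vector space with
complex structure `J`, satisfying `A(X,X) ∈ span_ℝ{X, JX}`, has the form
`A(X,Y) = φ(X)Y + φ(JX)JY` for some real linear functional `φ` (when dim_ℂ V ≥ 2). -/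
theorem submaximal_cprojective_stmt0
    (V : Type*) [AddCommGroup V] [Module ℝ V] [FiniteDimensional ℝ V]
    (J : V →ₗ[ℝ] V) (hJ : ∀ v, J (J v) = -v)
    (hdim : 4 ≤ Module.finrank ℝ V)
    (A : V →ₗ[ℝ] V →ₗ[ℝ] V)
    (hA1 : ∀ X Y, A (J X) Y = - J (A X Y))
    (hA2 : ∀ X Y, A X (J Y) = J (A X Y))
    (hspan : ∀ X, A X X ∈ Submodule.span ℝ ({X, J X} : Set V)) :
    ∃ φ : V →ₗ[ℝ] ℝ, ∀ X Y, A X Y = φ X • Y + φ (J X) • J Y := by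
  letI : SMul ℂ V := ⟨fun c v => c.re • v + c.im • J v⟩
  have hsd : ∀ (c : ℂ) (v : V), c • v = c.re • v + c.im • J v := fun _ _ => rfl
  letI : Module ℂ V :=
    { one_smul := by intro v; rw [hsd]; simp
      mul_smul := by
        intro c d v
        rw [hsd, hsd, hsd]
        simp only [map_add, map_smul, hJ, smul_neg, smul_add, smul_smul,
          Complex.mul_re, Complex.mul_im]
        module
      smul_zero := by intro c; rw [hsd]; simp
      smul_add := by intro c u v; rw [hsd, hsd, hsd]; simp only [map_add, smul_add]; abel
      add_smul := by
        intro c d v; rw [hsd, hsd, hsd]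
        simp only [Complex.add_re, Complex.add_im, add_smul]; abel
      zero_smul := by intro v; rw [hsd]; simp }
  have hJI : ∀ v : V, Complex.I • v = J v := by intro v; rw [hsd]; simp
  have hRC : ∀ (r : ℝ) (v : V), (r : ℂ) • v = r • v := by intro r v; rw [hsd]; simp
  have hsm1 : ∀ (c : ℂ) (X Y : V), A (c • X) Y = (starRingEnd ℂ c) • A X Y := by
    intro c X Y
    rw [hsd, hsd]
    simp only [map_add, map_smul, LinearMap.add_apply, LinearMap.smul_apply, hA1,
      Complex.conj_re, Complex.conj_im, smul_neg, neg_smul]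
  have hsm2 : ∀ (c : ℂ) (X Y : V), A X (c • Y) = c • A X Y := by
    intro c X Y
    rw [hsd, hsd]
    simp only [map_add, map_smul, hA2]
  have hdiag : ∀ X, ∃ c : ℂ, A X X = c • X := by
    intro X
    obtain ⟨p, q, hpq⟩ := Submodule.mem_span_pair.mp (hspan X)
    exact ⟨⟨p, q⟩, by rw [hsd]; exact hpq.symm⟩
  obtain ⟨f, hf⟩ := sesq_diag_aux (fun X Y => A X Y)
    (fun X X' Y => by simp [map_add]) (fun X Y Y' => by simp [map_add])
    hsm1 hsm2 hdiag
  -- a nonzero vector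
  have : Nontrivial V := by
    apply Module.nontrivial_of_finrank_pos (R := ℝ); omega
  obtain ⟨y0, hy0⟩ := exists_ne (0 : V)
  have hcancel : ∀ a b : ℂ, a • y0 = b • y0 → a = b := by
    intro a b h
    by_contra hab
    have h0 : (a - b) • y0 = 0 := by rw [sub_smul, h, sub_self]
    have h2 := inv_smul_smul₀ (sub_ne_zero.mpr hab) y0
    rw [h0, smul_zero] at h2
    exact hy0 h2.symm
  have hfadd : ∀ X X', f (X + X') = f X + f X' := by
    intro X X'
    apply hcancel
    rw [← hf, add_smul, ← hf, ← hf, map_add, LinearMap.add_apply]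
  have hfsmul : ∀ (r : ℝ) (X : V), f (r • X) = (r : ℂ) * f X := by
    intro r X
    apply hcancel
    rw [← hf, map_smul, LinearMap.smul_apply, hf, ← smul_smul, hRC]
  have hfJ : ∀ X, f (J X) = -Complex.I * f X := by
    intro X
    apply hcancel
    rw [← hf, hA1, hf, neg_mul, neg_smul, ← smul_smul, hJI]
  refine ⟨{ toFun := fun X => (f X).re
            map_add' := by
              intro X X'
              show (f (X + X')).re = (f X).re + (f X').re
              rw [hfadd]; simp
            map_smul' := by
              intro r X
              show (f (r • X)).re = r • (f X).re
              rw [hfsmul]; simp [Complex.mul_re, smul_eq_mul] }, ?_⟩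
  intro X Y
  have hre : (f (J X)).re = (f X).im := by rw [hfJ]; simp
  show A X Y = (f X).re • Y + (f (J X)).re • J Y
  rw [hre, hf, hsd]
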